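/- arXiv:0909.3021 — 5 statements merged into one kernel-verified Lean document; each statement's English description precedes it below -/
import Mathlib

section
/- Let ζ_j be a non-real nonzero complex number (ζ_j² ≠ ζ̄_j²), let ⟨y| = (y₁, y₂) be a nonzero complex row vector with |y⟩ = ⟨y|† its conjugate transpose, suppose α⁻¹ := ⟨y| diag(ζ_j, ζ̄_j) |y⟩ ≠ 0, and define |z⟩ = ((ζ_j² − ζ̄_j²)/2) · diag(α, ᾱ) · |y⟩ and B = |z⟩⟨y|. Then, with D(ζ) := I + B/(ζ − ζ_j) − σ₃Bσ₃/(ζ + ζ_j) and E(ζ) := I + B†/(ζ − ζ̄_j) − σ₃B†σ₃/(ζ + ζ̄_j), one has ⟨y| E(ζ_j) = 0, i.e. ⟨y| + (⟨y|y⟩/(ζ_j − ζ̄_j))⟨z| − (⟨y|σ₃|y⟩/(ζ_j + ζ̄_j))⟨z|σ₃ = 0. -/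
/-!
Write `c = ζ̄ⱼ`. Since `⟨y| |u⟩⟨v| = ⟨y|u⟩ ⟨v|`, the row vector `⟨y| E(ζⱼ)` is
`⟨y| + ⟨y|y⟩/(ζⱼ − c) ⟨z| − ⟨y|σ₃|y⟩/(ζⱼ + c) ⟨z|σ₃`. By partial fractions
`⟨y|y⟩/(ζⱼ − c) − ⟨y|σ₃|y⟩/(ζⱼ + c) = 2 (c |y₁|² + ζⱼ |y₂|²)/(ζⱼ² − c²)`, and `z̄₁ = ((c² − ζⱼ²)/2) ᾱ y₁`,
so the first component is `y₁ (1 − ᾱ (c |y₁|² + ζⱼ |y₂|²))`, which vanishes by the conjugate of the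
definition of `α`. The second component is the same computation with `y₁` and `y₂` exchanged.
-/

open Matrix Filter Topology ComplexConjugate

noncomputable section

attribute [local instance] Matrix.normedAddCommGroup Matrix.normedSpace

abbrev M2 := Matrix (Fin 2) (Fin 2) ℂ

def σ3 : M2 := !![1, 0; 0, -1]

def σ2 : M2 := !![0, -Complex.I; Complex.I, 0]

/-- A 2×2 matrix is diagonal if its off-diagonal entries vanish. -/
def IsDiag2 (A : M2) : Prop := A 0 1 = 0 ∧ A 1 0 = 0

/-- A 2×2 matrix is off-diagonal if its diagonal entries vanish. -/
def IsOffDiag2 (A : M2) : Prop := A 0 0 = 0 ∧ A 1 1 = 0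

theorem vecMul_one_add_smul_sub_smul_conjTranspose_vecMulVec {n R : Type*} [Fintype n]
    [DecidableEq n] [CommRing R] [StarRing R] (y z : n → R) (A : Matrix n n R) (a b : R) :
    y ᵥ* (1 + a • (vecMulVec z y)ᴴ - b • (A * (vecMulVec z y)ᴴ * A)) =
      y + (a * (y ⬝ᵥ star y)) • star z - (b * (y ⬝ᵥ A *ᵥ star y)) • (star z ᵥ* A) := by
  rw [conjTranspose_vecMulVec, mul_vecMulVec, vecMulVec_mul, vecMul_sub, vecMul_add, vecMul_one,
    vecMul_smul, vecMul_smul, vecMul_vecMulVec, vecMul_vecMulVec, smul_smul, smul_smul]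

theorem div_sub_div_eq_of_sq_ne_sq {K : Type*} [Field K] {a b : K} (h : a ^ 2 ≠ b ^ 2)
    (p q : K) :
    (p + q) / (a - b) - (p - q) / (a + b) = 2 * (b * p + a * q) / (a ^ 2 - b ^ 2) := by
  have hsub : a - b ≠ 0 := fun h' => h (by linear_combination (a + b) * h')
  have hadd : a + b ≠ 0 := fun h' => h (by linear_combination (a - b) * h')
  have hsq : a ^ 2 - b ^ 2 ≠ 0 := sub_ne_zero.mpr h
  field_simp
  ring

theorem add_div_sub_div_mul_eq_zero {K : Type*} [Field K] [NeZero (2 : K)] {a b β p q : K}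
    (h : a ^ 2 ≠ b ^ 2) (hβ : β * (b * p + a * q) = 1) (x : K) :
    x + ((p + q) / (a - b) - (p - q) / (a + b)) * ((b ^ 2 - a ^ 2) / 2 * β * x) = 0 := by
  have hsq : a ^ 2 - b ^ 2 ≠ 0 := sub_ne_zero.mpr h
  rw [div_sub_div_eq_of_sq_ne_sq h]
  field_simp
  linear_combination (-(a ^ 2 - b ^ 2)) * x * hβ

theorem dotProduct_star_self_fin_two (y : Fin 2 → ℂ) :
    y ⬝ᵥ star y = y 0 * conj (y 0) + y 1 * conj (y 1) := by
  simp [dotProduct, Fin.sum_univ_two]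

theorem dotProduct_σ3_mulVec_star (y : Fin 2 → ℂ) :
    y ⬝ᵥ σ3 *ᵥ star y = y 0 * conj (y 0) - y 1 * conj (y 1) := by
  simp [dotProduct, Fin.sum_univ_two, σ3, mulVec, sub_eq_add_neg]

theorem vecMul_σ3 (w : Fin 2 → ℂ) : w ᵥ* σ3 = ![w 0, -w 1] := by
  ext k
  fin_cases k <;> simp [σ3, vecMul, dotProduct, Fin.sum_univ_two]

theorem stmt6_general
    (zj : ℂ) (hzj : zj ^ 2 ≠ (conj zj) ^ 2)
    (y : Fin 2 → ℂ)
    (α : ℂ) (hα : α * (zj * y 0 * conj (y 0) + conj zj * y 1 * conj (y 1)) = 1)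
    (z : Fin 2 → ℂ)
    (hz0 : z 0 = (zj ^ 2 - (conj zj) ^ 2) / 2 * α * conj (y 0))
    (hz1 : z 1 = (zj ^ 2 - (conj zj) ^ 2) / 2 * conj α * conj (y 1))
    (B : M2) (hB : B = Matrix.vecMulVec z y)
    (E : ℂ → M2)
    (hE : ∀ w : ℂ, E w = 1 + (w - conj zj)⁻¹ • Bᴴ - (w + conj zj)⁻¹ • (σ3 * Bᴴ * σ3))
    : Matrix.vecMul y (E zj) = 0 ∧
      y + ((y 0 * conj (y 0) + y 1 * conj (y 1)) / (zj - conj zj)) • (fun k => conj (z k))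
        - ((y 0 * conj (y 0) - y 1 * conj (y 1)) / (zj + conj zj)) •
            Matrix.vecMul (fun k => conj (z k)) σ3 = 0 := by
  have hz0' : conj (z 0) = (conj zj ^ 2 - zj ^ 2) / 2 * conj α * y 0 := by
    simp [hz0, Complex.conj_ofNat]
  have hz1' : conj (z 1) = (conj zj ^ 2 - zj ^ 2) / 2 * α * y 1 := by
    simp [hz1, Complex.conj_ofNat]
  have hα_conj : conj α * (conj zj * (y 0 * conj (y 0)) + zj * (y 1 * conj (y 1))) = 1 := by
    simpa [mul_assoc, mul_comm (conj (y _))] using congrArg conj hα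
  have hα_swap : α * (conj zj * (y 1 * conj (y 1)) + zj * (y 0 * conj (y 0))) = 1 := by
    linear_combination hα
  have hdressed : y + ((y 0 * conj (y 0) + y 1 * conj (y 1)) / (zj - conj zj)) •
      (fun k => conj (z k)) - ((y 0 * conj (y 0) - y 1 * conj (y 1)) / (zj + conj zj)) •
        Matrix.vecMul (fun k => conj (z k)) σ3 = 0 := by
    ext k
    fin_cases k <;>
      simp only [vecMul_σ3, Pi.add_apply, Pi.sub_apply, Pi.smul_apply, smul_eq_mul,
        Fin.zero_eta, Fin.mk_one, cons_val_zero, cons_val_one, Pi.zero_apply]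
    · rw [hz0']
      linear_combination add_div_sub_div_mul_eq_zero hzj hα_conj (y 0)
    · rw [hz1']
      linear_combination add_div_sub_div_mul_eq_zero hzj hα_swap (y 1)
  refine ⟨?_, hdressed⟩
  rw [hE, hB, vecMul_one_add_smul_sub_smul_conjTranspose_vecMulVec, ← hdressed,
    dotProduct_star_self_fin_two, dotProduct_σ3_mulVec_star, ← div_eq_inv_mul, ← div_eq_inv_mul]
  rfl

/-- `⟨y| D⁻¹(ζⱼ) = 0` for the rank-one dressing factor, i.e.
`⟨y| + (⟨y|y⟩/(ζⱼ−ζ̄ⱼ))⟨z| − (⟨y|σ₃|y⟩/(ζⱼ+ζ̄ⱼ))⟨z|σ₃ = 0`. -/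
theorem stmt6
    (zj : ℂ) (hzj : zj ^ 2 ≠ (conj zj) ^ 2)
    (y : Fin 2 → ℂ) (hy : y ≠ 0)
    (α : ℂ) (hα : α * (zj * y 0 * conj (y 0) + conj zj * y 1 * conj (y 1)) = 1)
    (z : Fin 2 → ℂ)
    (hz0 : z 0 = (zj ^ 2 - (conj zj) ^ 2) / 2 * α * conj (y 0))
    (hz1 : z 1 = (zj ^ 2 - (conj zj) ^ 2) / 2 * conj α * conj (y 1))
    (B : M2) (hB : B = Matrix.vecMulVec z y)
    (E : ℂ → M2)
    (hE : ∀ w : ℂ, E w = 1 + (w - conj zj)⁻¹ • Bᴴ - (w + conj zj)⁻¹ • (σ3 * Bᴴ * σ3))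
    : Matrix.vecMul y (E zj) = 0 ∧
      y + ((y 0 * conj (y 0) + y 1 * conj (y 1)) / (zj - conj zj)) • (fun k => conj (z k))
        - ((y 0 * conj (y 0) - y 1 * conj (y 1)) / (zj + conj zj)) •
            Matrix.vecMul (fun k => conj (z k)) σ3 = 0 :=
  stmt6_general zj hzj y α hα z hz0 hz1 B hB E hE
end
end

section
/- With B, D, E as in the rank-one dressing construction (B = |z⟩⟨y| as above with ζ_j² ≠ ζ̄_j²), the matrices D(ζ) and E(ζ) are mutually inverse for all ζ ∉ {±ζ_j, ±ζ̄_j}: D(ζ)E(ζ) = I. -/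
open Matrix Filter Topology ComplexConjugate

noncomputable section

attribute [local instance] Matrix.normedAddCommGroup Matrix.normedSpace

/-!
Expanding by partial fractions, `D(w) E(w) - 1` is a sum of simple poles at `±ζ_j, ±conj ζ_j`
with residues `B E(ζ_j)`, `D(conj ζ_j) Bᴴ` and their `σ₃`-conjugates. Since `B = |z⟩⟨y|`, the first
residue vanishes as soon as `⟨y| E(ζ_j) = 0`, a direct computation using the normalisation of `α`;
the second is the conjugate transpose of the first, because `D(w)ᴴ = E(conj w)`.
-/

section Dressing

variable {K A : Type*} [Field K] [Ring A] [Algebra K A]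

def dressingFactor (σ M : A) (a w : K) : A :=
  1 + (w - a)⁻¹ • M - (w + a)⁻¹ • (σ * M * σ)

theorem inv_mul_inv_eq_inv_mul_inv_sub_inv {x y c : K} (hx : x ≠ 0) (hy : y ≠ 0) (hc : c ≠ 0)
    (hxy : y - x = c) : x⁻¹ * y⁻¹ = c⁻¹ * (x⁻¹ - y⁻¹) := by
  subst hxy
  field_simp

theorem dressingFactor_mul_dressingFactor {σ M N : A} {a b w : K} (hσ : σ * σ = 1)
    (hab : a ≠ b) (hab' : a ≠ -b) (hwa : w ≠ a) (hwa' : w ≠ -a) (hwb : w ≠ b) (hwb' : w ≠ -b) :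
    dressingFactor σ M a w * dressingFactor σ N b w =
      1 + (w - a)⁻¹ • (M * dressingFactor σ N b a) + (w - b)⁻¹ • (dressingFactor σ M a b * N)
        - (w + a)⁻¹ • (σ * (M * dressingFactor σ N b a) * σ)
        - (w + b)⁻¹ • (σ * (dressingFactor σ M a b * N) * σ) := by
  have hσ' (X : A) : σ * (σ * X) = X := by rw [← mul_assoc, hσ, one_mul]
  have hba : (b - a)⁻¹ = -(a - b)⁻¹ := by rw [← inv_neg, neg_sub]
  have hba' : (b + a)⁻¹ = (a + b)⁻¹ := by rw [add_comm]
  have h₁ : (w - a)⁻¹ * (w - b)⁻¹ = (a - b)⁻¹ * ((w - a)⁻¹ - (w - b)⁻¹) :=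
    inv_mul_inv_eq_inv_mul_inv_sub_inv (sub_ne_zero.2 hwa) (sub_ne_zero.2 hwb)
      (sub_ne_zero.2 hab) (by ring)
  have h₂ : (w - a)⁻¹ * (w + b)⁻¹ = (a + b)⁻¹ * ((w - a)⁻¹ - (w + b)⁻¹) :=
    inv_mul_inv_eq_inv_mul_inv_sub_inv (sub_ne_zero.2 hwa) (mt add_eq_zero_iff_eq_neg.1 hwb')
      (mt add_eq_zero_iff_eq_neg.1 hab') (by ring)
  have h₃ : (w - b)⁻¹ * (w + a)⁻¹ = (a + b)⁻¹ * ((w - b)⁻¹ - (w + a)⁻¹) :=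
    inv_mul_inv_eq_inv_mul_inv_sub_inv (sub_ne_zero.2 hwb) (mt add_eq_zero_iff_eq_neg.1 hwa')
      (mt add_eq_zero_iff_eq_neg.1 hab') (by ring)
  have h₄ : (w + b)⁻¹ * (w + a)⁻¹ = (a - b)⁻¹ * ((w + b)⁻¹ - (w + a)⁻¹) :=
    inv_mul_inv_eq_inv_mul_inv_sub_inv (mt add_eq_zero_iff_eq_neg.1 hwb')
      (mt add_eq_zero_iff_eq_neg.1 hwa') (sub_ne_zero.2 hab) (by ring)
  simp only [dressingFactor, add_mul, mul_add, sub_mul, mul_sub, smul_mul_assoc, mul_smul_comm,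
    one_mul, mul_one, mul_assoc, hσ, hσ', smul_add, smul_sub, hba, hba']
  linear_combination (norm := module) h₁ • (M * N) - h₂ • (M * (σ * (N * σ)))
    - h₃ • (σ * (M * (σ * N))) + h₄ • (σ * (M * (N * σ)))

theorem dressingFactor_mul_dressingFactor_eq_one {σ M N : A} {a b w : K} (hσ : σ * σ = 1)
    (hab : a ≠ b) (hab' : a ≠ -b) (hwa : w ≠ a) (hwa' : w ≠ -a) (hwb : w ≠ b) (hwb' : w ≠ -b)
    (hM : M * dressingFactor σ N b a = 0) (hN : dressingFactor σ M a b * N = 0) :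
    dressingFactor σ M a w * dressingFactor σ N b w = 1 := by
  rw [dressingFactor_mul_dressingFactor hσ hab hab' hwa hwa' hwb hwb', hM, hN]
  simp

theorem star_dressingFactor [StarRing K] [StarRing A] [StarModule K A] {σ : A}
    (hσ : star σ = σ) (M : A) (a w : K) :
    star (dressingFactor σ M a w) = dressingFactor σ (star M) (star a) (star w) := by
  simp only [dressingFactor, star_sub, star_add, star_one, star_smul, star_inv₀, star_mul, hσ,
    mul_assoc]

end Dressing

theorem σ3_mul_σ3 : σ3 * σ3 = 1 := by
  simp [σ3, Matrix.one_fin_two]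

theorem star_σ3 : star σ3 = σ3 := by
  simp [σ3, Matrix.star_eq_conjTranspose, ← Matrix.ext_iff, Fin.forall_fin_two]

theorem vecMul_dressingFactor_conjTranspose_eq_zero {a α : ℂ} {y z : Fin 2 → ℂ}
    (ha : a ^ 2 ≠ conj a ^ 2)
    (hα : α * (a * y 0 * conj (y 0) + conj a * y 1 * conj (y 1)) = 1)
    (hz0 : z 0 = (a ^ 2 - conj a ^ 2) / 2 * α * conj (y 0))
    (hz1 : z 1 = (a ^ 2 - conj a ^ 2) / 2 * conj α * conj (y 1)) :
    y ᵥ* dressingFactor σ3 (vecMulVec z y)ᴴ (conj a) a = 0 := by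
  have hα' : conj α * (conj a * conj (y 0) * y 0 + a * conj (y 1) * y 1) = 1 := by
    simpa using congrArg conj hα
  obtain ⟨hab, hab'⟩ := not_or.1 (ha ∘ sq_eq_sq_iff_eq_or_eq_neg.2)
  have hsub : a - conj a ≠ 0 := sub_ne_zero.2 hab
  have hadd : a + conj a ≠ 0 := mt add_eq_zero_iff_eq_neg.1 hab'
  ext i
  fin_cases i <;>
    simp only [Fin.zero_eta, Fin.mk_one, Fin.isValue, dressingFactor, conjTranspose_vecMulVec, σ3,
      vecMul, dotProduct, Fin.sum_univ_two, Matrix.sub_apply, Matrix.add_apply, Matrix.smul_apply,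
      mul_apply, vecMulVec_apply, one_fin_two, of_apply, cons_val_zero, cons_val_one,
      Pi.star_apply, Complex.star_def, hz0, hz1, map_mul, map_div₀, map_sub, map_pow, map_ofNat,
      Complex.conj_conj, smul_eq_mul, Pi.zero_apply] <;>
    field_simp
  -- after clearing denominators, component `i` is `2 (a² - conj a²) y i` times `1 - conj α · conj S`
  -- for `i = 0` and `1 - α S` for `i = 1`, where `α S = 1` is `hα`
  · linear_combination (-2 * (a ^ 2 - conj a ^ 2) * y 0) * hα'
  · linear_combination (-2 * (a ^ 2 - conj a ^ 2) * y 1) * hα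

theorem stmt7_general
    (zj : ℂ) (hzj : zj ^ 2 ≠ (conj zj) ^ 2)
    (y : Fin 2 → ℂ)
    (α : ℂ) (hα : α * (zj * y 0 * conj (y 0) + conj zj * y 1 * conj (y 1)) = 1)
    (z : Fin 2 → ℂ)
    (hz0 : z 0 = (zj ^ 2 - (conj zj) ^ 2) / 2 * α * conj (y 0))
    (hz1 : z 1 = (zj ^ 2 - (conj zj) ^ 2) / 2 * conj α * conj (y 1))
    (B : M2) (hB : B = Matrix.vecMulVec z y)
    (E : ℂ → M2)
    (hE : ∀ w : ℂ, E w = 1 + (w - conj zj)⁻¹ • Bᴴ - (w + conj zj)⁻¹ • (σ3 * Bᴴ * σ3))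
    (D : ℂ → M2)
    (hD : ∀ w : ℂ, D w = 1 + (w - zj)⁻¹ • B - (w + zj)⁻¹ • (σ3 * B * σ3)) :
    ∀ w : ℂ, w ≠ zj → w ≠ -zj → w ≠ conj zj → w ≠ -conj zj → D w * E w = 1 := by
  intro w hwa hwa' hwb hwb'
  obtain ⟨hab, hab'⟩ := not_or.1 (hzj ∘ sq_eq_sq_iff_eq_or_eq_neg.2)
  have hres : B * dressingFactor σ3 Bᴴ (conj zj) zj = 0 := by
    rw [hB, vecMulVec_mul, vecMul_dressingFactor_conjTranspose_eq_zero hzj hα hz0 hz1,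
      vecMulVec_zero]
  have hres' : dressingFactor σ3 B zj (conj zj) * Bᴴ = 0 := by
    have := congrArg star hres
    rw [star_mul, star_zero, star_dressingFactor star_σ3] at this
    simpa [Matrix.star_eq_conjTranspose] using this
  rw [hD, hE, ← dressingFactor, ← dressingFactor]
  exact dressingFactor_mul_dressingFactor_eq_one σ3_mul_σ3 hab hab' hwa hwa' hwb hwb' hres hres'

/-- The rank-one dressing factors `D(ζ)` and `E(ζ) = D⁻¹(ζ)` are mutually inverse. -/
theorem stmt7
    (zj : ℂ) (hzj : zj ^ 2 ≠ (conj zj) ^ 2)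
    (y : Fin 2 → ℂ) (hy : y ≠ 0)
    (α : ℂ) (hα : α * (zj * y 0 * conj (y 0) + conj zj * y 1 * conj (y 1)) = 1)
    (z : Fin 2 → ℂ)
    (hz0 : z 0 = (zj ^ 2 - (conj zj) ^ 2) / 2 * α * conj (y 0))
    (hz1 : z 1 = (zj ^ 2 - (conj zj) ^ 2) / 2 * conj α * conj (y 1))
    (B : M2) (hB : B = Matrix.vecMulVec z y)
    (E : ℂ → M2)
    (hE : ∀ w : ℂ, E w = 1 + (w - conj zj)⁻¹ • Bᴴ - (w + conj zj)⁻¹ • (σ3 * Bᴴ * σ3))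
    (D : ℂ → M2)
    (hD : ∀ w : ℂ, D w = 1 + (w - zj)⁻¹ • B - (w + zj)⁻¹ • (σ3 * B * σ3)) :
    ∀ w : ℂ, w ≠ zj → w ≠ -zj → w ≠ conj zj → w ≠ -conj zj → D w * E w = 1 :=
  stmt7_general zj hzj y α hα z hz0 hz1 B hB E hE D hD
end
end

section
/- For the rank-one dressing factor D_j(ζ) = I + B_j/(ζ−ζ_j) − σ₃B_jσ₃/(ζ+ζ_j) constructed from B_j = |z_j⟩⟨y_j| as in the dressing method, the identity σ₂ B_j^T σ₂ = ((ζ_j² − ζ̄_j²)/(2ζ_j)) D_j⁻¹(ζ_j) holds, where σ₂ = [[0,−i],[i,0]] and D_j⁻¹(ζ) = I + B_j†/(ζ−ζ̄_j) − σ₃B_j†σ₃/(ζ+ζ̄_j). -/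
open Matrix Filter Topology ComplexConjugate

noncomputable section

attribute [local instance] Matrix.normedAddCommGroup Matrix.normedSpace

/-!
Conjugation by `σ₂` turns the transpose of a `2 × 2` matrix into its adjugate, and conjugation by
`σ₃` flips the sign of the off-diagonal part, so the two poles of `Dⱼ⁻¹(ζ)` combine into
`2 / (ζ² - ζ̄²)` times `ζ̄ · (diagonal part) + ζ · (off-diagonal part)` of `Bⱼ†`. Both sides then
agree entrywise: off the diagonal because `conj ((ζⱼ² - ζ̄ⱼ²) / 2) = -(ζⱼ² - ζ̄ⱼ²) / 2`, on the
diagonal because of the normalisation `αⱼ⁻¹ = ⟨yⱼ|diag(ζⱼ, ζ̄ⱼ)|yⱼ⟩` and its conjugate.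
-/

theorem sigma2_mul_transpose_mul_sigma2 (A : M2) : σ2 * Aᵀ * σ2 = adjugate A := by
  rw [adjugate_fin_two]
  ext i j
  fin_cases i <;> fin_cases j <;>
    simp [σ2, mul_apply, vecMul, dotProduct, Fin.sum_univ_two, mul_comm Complex.I, mul_assoc]

theorem sigma3_mul_mul_sigma3 (A : M2) :
    σ3 * A * σ3 = !![A 0 0, -A 0 1; -A 1 0, A 1 1] := by
  ext i j
  fin_cases i <;> fin_cases j <;> simp [σ3, mul_apply, vecMul, dotProduct, Fin.sum_univ_two]

theorem inv_sub_smul_sub_inv_add_smul_sigma3 {w a : ℂ} (h : w ^ 2 ≠ a ^ 2) (A : M2) :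
    (w - a)⁻¹ • A - (w + a)⁻¹ • (σ3 * A * σ3) =
      (2 / (w ^ 2 - a ^ 2)) • !![a * A 0 0, w * A 0 1; w * A 1 0, a * A 1 1] := by
  have hsub : w - a ≠ 0 := fun h' => h (by rw [sub_eq_zero.mp h'])
  have hadd : w + a ≠ 0 := fun h' => h (by linear_combination (w - a) * h')
  have hdiag : (w - a)⁻¹ - (w + a)⁻¹ = 2 / (w ^ 2 - a ^ 2) * a := by field_simp; ring
  have hoff : (w - a)⁻¹ + (w + a)⁻¹ = 2 / (w ^ 2 - a ^ 2) * w := by field_simp; ring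
  rw [sigma3_mul_mul_sigma3]
  ext i j
  fin_cases i <;> fin_cases j <;>
    simp only [Matrix.sub_apply, Matrix.smul_apply, of_apply, smul_eq_mul, cons_val',
      cons_val_zero, cons_val_one, cons_val_fin_one, Fin.isValue, Fin.zero_eta, Fin.mk_one]
  · linear_combination A 0 0 * hdiag
  · linear_combination A 0 1 * hoff
  · linear_combination A 1 0 * hoff
  · linear_combination A 1 1 * hdiag

theorem stmt8_general
    (zj : ℂ) (hzj : zj ^ 2 ≠ (conj zj) ^ 2)
    (y : Fin 2 → ℂ)
    (α : ℂ) (hα : α * (zj * y 0 * conj (y 0) + conj zj * y 1 * conj (y 1)) = 1)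
    (z : Fin 2 → ℂ)
    (hz0 : z 0 = (zj ^ 2 - (conj zj) ^ 2) / 2 * α * conj (y 0))
    (hz1 : z 1 = (zj ^ 2 - (conj zj) ^ 2) / 2 * conj α * conj (y 1))
    (B : M2) (hB : B = Matrix.vecMulVec z y)
    (E : ℂ → M2)
    (hE : ∀ w : ℂ, E w = 1 + (w - conj zj)⁻¹ • Bᴴ - (w + conj zj)⁻¹ • (σ3 * Bᴴ * σ3))
    : σ2 * Bᵀ * σ2 = ((zj ^ 2 - (conj zj) ^ 2) / (2 * zj)) • E zj := by
  have hzj0 : zj ≠ 0 := by rintro rfl; simp at hzj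
  have hc : zj ^ 2 - conj zj ^ 2 ≠ 0 := sub_ne_zero.mpr hzj
  have hc_conj : conj ((zj ^ 2 - conj zj ^ 2) / 2) = -((zj ^ 2 - conj zj ^ 2) / 2) := by
    simp only [map_div₀, map_sub, map_pow, Complex.conj_conj, map_ofNat]; ring
  have hα' : conj α * (zj * y 1 * conj (y 1) + conj zj * y 0 * conj (y 0)) = 1 := by
    simpa [mul_comm, mul_left_comm, add_comm] using congrArg conj hα
  rw [hE, add_sub_assoc, inv_sub_smul_sub_inv_add_smul_sigma3 hzj,
    sigma2_mul_transpose_mul_sigma2, adjugate_fin_two, one_fin_two, hB]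
  ext i j
  fin_cases i <;> fin_cases j <;>
    simp only [vecMulVec_apply, conjTranspose_apply, hz0, hz1, Complex.star_def, map_mul,
      hc_conj, Complex.conj_conj, Matrix.add_apply, Matrix.smul_apply, of_apply,
      cons_val', cons_val_zero, cons_val_one, cons_val_fin_one, smul_eq_mul, Fin.isValue,
      Fin.zero_eta, Fin.mk_one] <;>
    field_simp
  · linear_combination hα'
  · ring
  · ring
  · linear_combination hα

/-- `σ₂ Bⱼᵀ σ₂ = ((ζⱼ² − ζ̄ⱼ²)/(2ζⱼ)) Dⱼ⁻¹(ζⱼ)`. -/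
theorem stmt8
    (zj : ℂ) (hzj : zj ^ 2 ≠ (conj zj) ^ 2)
    (y : Fin 2 → ℂ) (hy : y ≠ 0)
    (α : ℂ) (hα : α * (zj * y 0 * conj (y 0) + conj zj * y 1 * conj (y 1)) = 1)
    (z : Fin 2 → ℂ)
    (hz0 : z 0 = (zj ^ 2 - (conj zj) ^ 2) / 2 * α * conj (y 0))
    (hz1 : z 1 = (zj ^ 2 - (conj zj) ^ 2) / 2 * conj α * conj (y 1))
    (B : M2) (hB : B = Matrix.vecMulVec z y)
    (E : ℂ → M2)
    (hE : ∀ w : ℂ, E w = 1 + (w - conj zj)⁻¹ • Bᴴ - (w + conj zj)⁻¹ • (σ3 * Bᴴ * σ3))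
    : σ2 * Bᵀ * σ2 = ((zj ^ 2 - (conj zj) ^ 2) / (2 * zj)) • E zj :=
  stmt8_general zj hzj y α hα z hz0 hz1 B hB E hE
end
end

section
/- Suppose ψ(x,t,ζ) is an invertible 2×2 matrix solution of the pair ψₓ + iζ⁻²σ₃ψ = ζ⁻¹Q₋₁ψ and ψₜ + i(1/ζ − ζ/2)²σ₃ψ = (ζ⁻¹Q₋₁ − (i/2)σ₃U² + (iζ/2)σ₃U)ψ for all ζ in an open subset of ℂ∖{0} with at least five distinct values of ζ, where Q₋₁(x,t) is off-diagonal and U(x,t) = [[0,u],[−ū,0]]. Then equality of mixed partials ψₓₜ = ψₜₓ forces Q₋₁ = Uₓ and the function u satisfies u_{tx} + u − 2iu_x − u_{xx} − i|u|²u_x = 0. -/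
open Matrix Filter Topology ComplexConjugate

noncomputable section

attribute [local instance] Matrix.normedAddCommGroup Matrix.normedSpace

namespace Stmt15Aux

def entryL (i j : Fin 2) : M2 →L[ℝ] ℂ :=
  LinearMap.toContinuousLinearMap
    { toFun := fun M => M i j
      map_add' := fun _ _ => rfl
      map_smul' := fun _ _ => rfl }

@[simp] lemma entryL_apply (i j : Fin 2) (M : M2) : entryL i j M = M i j := rfl

def mulL : M2 →L[ℝ] M2 →L[ℝ] M2 :=
  LinearMap.toContinuousLinearMap
    { toFun := fun A => LinearMap.toContinuousLinearMap (LinearMap.mul ℝ M2 A)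
      map_add' := fun A B => by ext x; simp [add_mul]
      map_smul' := fun c A => by ext x; simp [smul_mul_assoc] }

@[simp] lemma mulL_apply (A B : M2) : mulL A B = A * B := rfl

lemma isBBM_mul : IsBoundedBilinearMap ℝ (fun p : M2 × M2 => p.1 * p.2) :=
  mulL.isBoundedBilinearMap

end Stmt15Aux

lemma HasDerivAt.matmul {f g : ℝ → M2} {f' g' : M2} {x : ℝ}
    (hf : HasDerivAt f f' x) (hg : HasDerivAt g g' x) :
    HasDerivAt (fun s => f s * g s) (f' * g x + f x * g') x := by
  have h := (Stmt15Aux.isBBM_mul.hasFDerivAt (f x, g x)).comp_hasDerivAt x (hf.prodMk hg)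
  simp [IsBoundedBilinearMap.deriv_apply, add_comm] at h
  exact h

lemma HasDerivAt.entry {f : ℝ → M2} {f' : M2} {x : ℝ} (h : HasDerivAt f f' x)
    (i j : Fin 2) : HasDerivAt (fun s => f s i j) (f' i j) x :=
  (Stmt15Aux.entryL i j).hasFDerivAt.comp_hasDerivAt x h

namespace Stmt15Aux

variable {E : Type*} [NormedAddCommGroup E] [NormedSpace ℝ E]

lemma hasDerivAt_fst (f : ℝ → ℝ → E) (hf : ContDiff ℝ (⊤ : ℕ∞) fun p : ℝ × ℝ => f p.1 p.2)
    (x t : ℝ) :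
    HasDerivAt (fun x' => f x' t) (deriv (fun x' => f x' t) x) x := by
  have h2 : DifferentiableAt ℝ (fun x' : ℝ => (x', t)) x :=
    (differentiableAt_id.prodMk (differentiableAt_const t))
  exact (((hf.differentiable (by simp)) (x, t)).comp x h2).hasDerivAt

lemma hasDerivAt_snd (f : ℝ → ℝ → E) (hf : ContDiff ℝ (⊤ : ℕ∞) fun p : ℝ × ℝ => f p.1 p.2)
    (x t : ℝ) :
    HasDerivAt (fun t' => f x t') (deriv (fun t' => f x t') t) t := by
  have h2 : DifferentiableAt ℝ (fun t' : ℝ => (x, t')) t :=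
    ((differentiableAt_const x).prodMk differentiableAt_id)
  exact (((hf.differentiable (by simp)) (x, t)).comp t h2).hasDerivAt

lemma clairaut (f : ℝ → ℝ → E) (hf : ContDiff ℝ (⊤ : ℕ∞) fun p : ℝ × ℝ => f p.1 p.2)
    (x t : ℝ) :
    deriv (fun x' => deriv (fun t' => f x' t') t) x
      = deriv (fun t' => deriv (fun x' => f x' t') x) t := by
  set F : ℝ × ℝ → E := fun p => f p.1 p.2 with hF
  have hd : Differentiable ℝ F := hf.differentiable (by simp)
  have hG : ContDiff ℝ (⊤ : ℕ∞) (fderiv ℝ F) := hf.fderiv_right ((by simp))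
  set G := fderiv ℝ F with hGdef
  have hsectt : ∀ x' t', HasDerivAt (fun s => f x' s) (G (x', t') (0, 1)) t' := by
    intro x' t'
    have hline : HasDerivAt (fun s : ℝ => ((x' : ℝ), s)) (0, 1) t' :=
      (hasDerivAt_const t' x').prodMk (hasDerivAt_id t')
    exact (hd (x', t')).hasFDerivAt.comp_hasDerivAt t' hline
  have hsectx : ∀ x' t', HasDerivAt (fun s => f s t') (G (x', t') (1, 0)) x' := by
    intro x' t'
    have hline : HasDerivAt (fun s : ℝ => ((s : ℝ), t')) (1, 0) x' :=
      (hasDerivAt_id x').prodMk (hasDerivAt_const x' t')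
    exact (hd (x', t')).hasFDerivAt.comp_hasDerivAt x' hline
  set f'' := fderiv ℝ G (x, t) with hf''
  have hsymm := second_derivative_symmetric (f := F) (f' := G)
    (fun y => (hd y).hasFDerivAt) ((hG.differentiable (by simp) (x, t)).hasFDerivAt)
    (1, 0) (0, 1)
  have hGx : HasDerivAt (fun x' => G (x', t)) (f'' (1, 0)) x := by
    have hline : HasDerivAt (fun s : ℝ => ((s : ℝ), t)) (1, 0) x :=
      (hasDerivAt_id x).prodMk (hasDerivAt_const x t)
    exact ((hG.differentiable (by simp) (x, t)).hasFDerivAt).comp_hasDerivAt x hline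
  have hGt : HasDerivAt (fun t' => G (x, t')) (f'' (0, 1)) t := by
    have hline : HasDerivAt (fun s : ℝ => ((x : ℝ), s)) (0, 1) t :=
      (hasDerivAt_const t x).prodMk (hasDerivAt_id t)
    exact ((hG.differentiable (by simp) (x, t)).hasFDerivAt).comp_hasDerivAt t hline
  have hL : deriv (fun x' => deriv (fun t' => f x' t') t) x = f'' (1, 0) (0, 1) := by
    have h1 : (fun x' => deriv (fun t' => f x' t') t) = fun x' => G (x', t) (0, 1) :=
      funext fun x' => (hsectt x' t).deriv
    rw [h1]
    have := hGx.clm_apply (hasDerivAt_const x ((0 : ℝ), (1 : ℝ)))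
    simpa using this.deriv
  have hR : deriv (fun t' => deriv (fun x' => f x' t') x) t = f'' (0, 1) (1, 0) := by
    have h1 : (fun t' => deriv (fun x' => f x' t') x) = fun t' => G (x, t') (1, 0) :=
      funext fun t' => (hsectx x t').deriv
    rw [h1]
    have := hGt.clm_apply (hasDerivAt_const t ((1 : ℝ), (0 : ℝ)))
    simpa using this.deriv
  rw [hL, hR, hsymm]

lemma mat_expand (X A B C P : M2) :
    (X + A * B - C - B * A) * P = X * P + A * (B * P) - (C * P + B * (A * P)) := by
  noncomm_ring

lemma cancel_unit {M P : M2} (hP : IsUnit P) (h : M * P = 0) : M = 0 := by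
  obtain ⟨v, hv⟩ := hP
  have h2 : M * (P * ↑v⁻¹) = 0 := by rw [← mul_assoc, h, zero_mul]
  rwa [← hv, Units.mul_inv, mul_one] at h2

end Stmt15Aux

set_option maxHeartbeats 2000000

/-- Zero-curvature / compatibility: if an invertible matrix solution `ψ` of the Lax
pair with off-diagonal coefficient `Q₋₁` exists for at least five values of `ζ` in
an open set avoiding `0`, then `Q₋₁ = Uₓ` and `u` satisfies
`u_{tx} + u − 2iu_x − u_{xx} − i|u|²u_x = 0`. -/
theorem stmt15 (u : ℝ → ℝ → ℂ) (hu : ContDiff ℝ (⊤ : ℕ∞) (fun p : ℝ × ℝ => u p.1 p.2))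
    (Q : ℝ → ℝ → M2) (hQoff : ∀ x t, IsOffDiag2 (Q x t))
    (hQsmooth : ContDiff ℝ (⊤ : ℕ∞) (fun p : ℝ × ℝ => Q p.1 p.2))
    (U : ℝ → ℝ → M2) (hU : ∀ x t, U x t = !![0, u x t; -conj (u x t), 0])
    (S : Set ℂ) (hSopen : IsOpen S) (hS0 : (0 : ℂ) ∉ S)
    (hS5 : ∃ w : Fin 5 → ℂ, Function.Injective w ∧ ∀ i, w i ∈ S)
    (ψ : ℝ → ℝ → ℂ → M2)
    (hψsmooth : ∀ ζ ∈ S, ContDiff ℝ (⊤ : ℕ∞) (fun p : ℝ × ℝ => ψ p.1 p.2 ζ))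
    (hψinv : ∀ (x t : ℝ), ∀ ζ ∈ S, IsUnit (ψ x t ζ))
    (hψx : ∀ (x t : ℝ), ∀ ζ ∈ S, HasDerivAt (fun x' : ℝ => ψ x' t ζ)
      ((ζ⁻¹ • Q x t - (Complex.I / ζ ^ 2) • σ3) * ψ x t ζ) x)
    (hψt : ∀ (x t : ℝ), ∀ ζ ∈ S, HasDerivAt (fun t' : ℝ => ψ x t' ζ)
      ((ζ⁻¹ • Q x t - (Complex.I * (1 / ζ - ζ / 2) ^ 2) • σ3
        - (Complex.I / 2) • (σ3 * (U x t) ^ 2) + (Complex.I * ζ / 2) • (σ3 * U x t))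
        * ψ x t ζ) t) :
    (∀ x t : ℝ, Q x t = deriv (fun x' => U x' t) x) ∧
    (∀ x t : ℝ, deriv (fun x' => deriv (fun t' => u x' t') t) x + u x t
      - 2 * Complex.I * deriv (fun x' => u x' t) x
      - deriv (fun x' => deriv (fun y => u y t) x') x
      - Complex.I * (u x t * conj (u x t)) * deriv (fun x' => u x' t) x = 0) := by
  obtain ⟨w, hwinj, hwS⟩ := hS5
  have hwne : ∀ k, w k ≠ 0 := fun k h => hS0 (h ▸ hwS k)
  -- a polynomial vanishing lemma
  have hpoly : ∀ (a b : ℂ), (∀ k : Fin 5, a * (w k) ^ 2 + b * (w k) ^ 4 = 0) →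
      a = 0 ∧ b = 0 := by
    intro a b hab
    have hp : (Polynomial.C a * Polynomial.X ^ 2
        + Polynomial.C b * Polynomial.X ^ 4 : Polynomial ℂ) = 0 := by
      apply Polynomial.eq_zero_of_natDegree_lt_card_of_eval_eq_zero _ hwinj
      · intro k; simpa using hab k
      · have hdeg : (Polynomial.C a * Polynomial.X ^ 2
            + Polynomial.C b * Polynomial.X ^ 4 : Polynomial ℂ).natDegree ≤ 4 := by
          compute_degree
        have : (4 : ℕ) < Fintype.card (Fin 5) := by simp
        exact lt_of_le_of_lt hdeg this
    constructor
    · have := congrArg (fun p => Polynomial.coeff p 2) hp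
      simpa using this
    · have := congrArg (fun p => Polynomial.coeff p 4) hp
      simpa using this
  -- derivative of U in x
  have hUderiv : ∀ x t : ℝ, HasDerivAt (fun x' => U x' t)
      (!![0, deriv (fun x' => u x' t) x;
          -conj (deriv (fun x' => u x' t) x), 0]) x := by
    intro x t
    have hux : HasDerivAt (fun x' => u x' t) (deriv (fun x' => u x' t) x) x :=
      Stmt15Aux.hasDerivAt_fst u hu x t
    have hcux : HasDerivAt (fun x' => conj (u x' t))
        (conj (deriv (fun x' => u x' t) x)) x := by
      have h := (Complex.conjCLE.toContinuousLinearMap.hasFDerivAt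
        (x := u x t)).comp_hasDerivAt x hux
      exact h
    have h1 : HasDerivAt
        (fun x' => u x' t • (!![0,1;0,0] : M2) + conj (u x' t) • (!![0,0;-1,0] : M2))
        ((deriv (fun x' => u x' t) x) • (!![0,1;0,0] : M2)
          + conj (deriv (fun x' => u x' t) x) • (!![0,0;-1,0] : M2)) x :=
      (hux.smul_const _).add (hcux.smul_const _)
    have hfun : (fun x' => U x' t)
        = fun x' => u x' t • (!![0,1;0,0] : M2) + conj (u x' t) • (!![0,0;-1,0] : M2) := by
      funext x'
      rw [hU]
      ext i j
      fin_cases i <;> fin_cases j <;> simp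
    rw [hfun]
    convert h1 using 1
    ext i j
    fin_cases i <;> fin_cases j <;> simp
  -- the key pointwise identities
  have key : ∀ x t : ℝ,
      Q x t 0 1 = deriv (fun x' => u x' t) x ∧
      Q x t 1 0 = -conj (deriv (fun x' => u x' t) x) ∧
      deriv (fun t' => Q x t' 0 1) t - deriv (fun x' => Q x' t 0 1) x + u x t
        - 2 * Complex.I * Q x t 0 1
        - Complex.I * (u x t * conj (u x t)) * Q x t 0 1 = 0 := by
    intro x t
    set u0 := u x t with hu0
    set ux := deriv (fun x' => u x' t) x with huxdef
    set q0 := Q x t 0 1 with hq0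
    set r0 := Q x t 1 0 with hr0
    set qt := deriv (fun t' => Q x t' 0 1) t with hqt
    set rt := deriv (fun t' => Q x t' 1 0) t with hrt
    set qx := deriv (fun x' => Q x' t 0 1) x with hqx
    set rx := deriv (fun x' => Q x' t 1 0) x with hrx
    set W : M2 := !![0, ux; -conj ux, 0] with hW
    have hUd : HasDerivAt (fun x' => U x' t) W x := hUderiv x t
    have hUxt : U x t = !![0, u0; -conj u0, 0] := by rw [hU x t, hu0]
    -- matrix derivatives of Q
    have hQt0 : HasDerivAt (fun t' => Q x t') (deriv (fun t' => Q x t') t) t :=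
      Stmt15Aux.hasDerivAt_snd Q hQsmooth x t
    have hQx0 : HasDerivAt (fun x' => Q x' t) (deriv (fun x' => Q x' t) x) x :=
      Stmt15Aux.hasDerivAt_fst Q hQsmooth x t
    have hQtmat : deriv (fun t' => Q x t') t = !![0, qt; rt, 0] := by
      ext i j
      fin_cases i <;> fin_cases j
      · have h0 : HasDerivAt (fun t' => Q x t' 0 0) 0 t := by
          have he : (fun t' => Q x t' 0 0) = fun _ => 0 := funext fun t' => (hQoff x t').1
          rw [he]; exact hasDerivAt_const t 0
        simpa using (hQt0.entry 0 0).unique h0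
      · simpa [hqt] using ((hQt0.entry 0 1).deriv).symm
      · simpa [hrt] using ((hQt0.entry 1 0).deriv).symm
      · have h0 : HasDerivAt (fun t' => Q x t' 1 1) 0 t := by
          have he : (fun t' => Q x t' 1 1) = fun _ => 0 := funext fun t' => (hQoff x t').2
          rw [he]; exact hasDerivAt_const t 0
        simpa using (hQt0.entry 1 1).unique h0
    have hQxmat : deriv (fun x' => Q x' t) x = !![0, qx; rx, 0] := by
      ext i j
      fin_cases i <;> fin_cases j
      · have h0 : HasDerivAt (fun x' => Q x' t 0 0) 0 x := by
          have he : (fun x' => Q x' t 0 0) = fun _ => 0 := funext fun x' => (hQoff x' t).1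
          rw [he]; exact hasDerivAt_const x 0
        simpa using (hQx0.entry 0 0).unique h0
      · simpa [hqx] using ((hQx0.entry 0 1).deriv).symm
      · simpa [hrx] using ((hQx0.entry 1 0).deriv).symm
      · have h0 : HasDerivAt (fun x' => Q x' t 1 1) 0 x := by
          have he : (fun x' => Q x' t 1 1) = fun _ => 0 := funext fun x' => (hQoff x' t).2
          rw [he]; exact hasDerivAt_const x 0
        simpa using (hQx0.entry 1 1).unique h0
    have hQt' : HasDerivAt (fun t' => Q x t') (!![0, qt; rt, 0] : M2) t :=
      hQtmat ▸ hQt0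
    have hQx' : HasDerivAt (fun x' => Q x' t) (!![0, qx; rx, 0] : M2) x :=
      hQxmat ▸ hQx0
    have hQmat : Q x t = !![0, q0; r0, 0] := by
      ext i j
      fin_cases i <;> fin_cases j <;>
        simp [(hQoff x t).1, (hQoff x t).2, hq0, hr0]
    have hUU : HasDerivAt (fun x' => U x' t * U x' t) (W * U x t + U x t * W) x :=
      hUd.matmul hUd
    have hsUU : HasDerivAt (fun x' => σ3 * (U x' t) ^ 2)
        ((0 : M2) * (U x t * U x t) + σ3 * (W * U x t + U x t * W)) x := by
      have hfun : (fun x' => σ3 * (U x' t) ^ 2) = fun x' => σ3 * (U x' t * U x' t) := by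
        funext x'; rw [pow_two]
      rw [hfun]
      exact (hasDerivAt_const x σ3).matmul hUU
    have hsU : HasDerivAt (fun x' => σ3 * U x' t) ((0 : M2) * U x t + σ3 * W) x :=
      (hasDerivAt_const x σ3).matmul hUd
    -- zero curvature identity for each of the five spectral values
    have hE : ∀ k : Fin 5,
        (w k)⁻¹ • (!![0, qt; rt, 0] : M2)
        + ((w k)⁻¹ • Q x t - (Complex.I / (w k) ^ 2) • σ3)
          * ((w k)⁻¹ • Q x t - (Complex.I * (1 / w k - w k / 2) ^ 2) • σ3
             - (Complex.I / 2) • (σ3 * (U x t) ^ 2) + (Complex.I * w k / 2) • (σ3 * U x t))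
        - ((w k)⁻¹ • (!![0, qx; rx, 0] : M2)
           - (Complex.I / 2) • ((0 : M2) * (U x t * U x t) + σ3 * (W * U x t + U x t * W))
           + (Complex.I * w k / 2) • ((0 : M2) * U x t + σ3 * W))
        - ((w k)⁻¹ • Q x t - (Complex.I * (1 / w k - w k / 2) ^ 2) • σ3
             - (Complex.I / 2) • (σ3 * (U x t) ^ 2) + (Complex.I * w k / 2) • (σ3 * U x t))
          * ((w k)⁻¹ • Q x t - (Complex.I / (w k) ^ 2) • σ3) = 0 := by
      intro k
      set ζ := w k with hζdef
      have hζ : ζ ∈ S := hwS k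
      have hAt : HasDerivAt (fun t' => ζ⁻¹ • Q x t' - (Complex.I / ζ ^ 2) • σ3)
          (ζ⁻¹ • (!![0, qt; rt, 0] : M2)) t :=
        (hQt'.const_smul ζ⁻¹).sub_const ((Complex.I / ζ ^ 2) • σ3)
      have hBx : HasDerivAt (fun x' => ζ⁻¹ • Q x' t
            - (Complex.I * (1 / ζ - ζ / 2) ^ 2) • σ3
            - (Complex.I / 2) • (σ3 * (U x' t) ^ 2) + (Complex.I * ζ / 2) • (σ3 * U x' t))
          (ζ⁻¹ • (!![0, qx; rx, 0] : M2)
            - (Complex.I / 2) • ((0 : M2) * (U x t * U x t) + σ3 * (W * U x t + U x t * W))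
            + (Complex.I * ζ / 2) • ((0 : M2) * U x t + σ3 * W)) x :=
        (((hQx'.const_smul ζ⁻¹).sub_const ((Complex.I * (1 / ζ - ζ / 2) ^ 2) • σ3)).sub (hsUU.const_smul (Complex.I / 2))).add (hsU.const_smul (Complex.I * ζ / 2))
      have hGt : HasDerivAt (fun t' => deriv (fun x' => ψ x' t' ζ) x)
          (ζ⁻¹ • (!![0, qt; rt, 0] : M2) * ψ x t ζ
            + (ζ⁻¹ • Q x t - (Complex.I / ζ ^ 2) • σ3)
              * ((ζ⁻¹ • Q x t - (Complex.I * (1 / ζ - ζ / 2) ^ 2) • σ3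
                  - (Complex.I / 2) • (σ3 * (U x t) ^ 2)
                  + (Complex.I * ζ / 2) • (σ3 * U x t)) * ψ x t ζ)) t := by
        have hfun : (fun t' => deriv (fun x' => ψ x' t' ζ) x)
            = fun t' => (ζ⁻¹ • Q x t' - (Complex.I / ζ ^ 2) • σ3) * ψ x t' ζ :=
          funext fun t' => (hψx x t' ζ hζ).deriv
        rw [hfun]
        exact hAt.matmul (hψt x t ζ hζ)
      have hHx : HasDerivAt (fun x' => deriv (fun t' => ψ x' t' ζ) t)
          ((ζ⁻¹ • (!![0, qx; rx, 0] : M2)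
            - (Complex.I / 2) • ((0 : M2) * (U x t * U x t) + σ3 * (W * U x t + U x t * W))
            + (Complex.I * ζ / 2) • ((0 : M2) * U x t + σ3 * W)) * ψ x t ζ
            + (ζ⁻¹ • Q x t - (Complex.I * (1 / ζ - ζ / 2) ^ 2) • σ3
               - (Complex.I / 2) • (σ3 * (U x t) ^ 2) + (Complex.I * ζ / 2) • (σ3 * U x t))
              * ((ζ⁻¹ • Q x t - (Complex.I / ζ ^ 2) • σ3) * ψ x t ζ)) x := by
        have hfun : (fun x' => deriv (fun t' => ψ x' t' ζ) t)
            = fun x' => (ζ⁻¹ • Q x' t - (Complex.I * (1 / ζ - ζ / 2) ^ 2) • σ3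
               - (Complex.I / 2) • (σ3 * (U x' t) ^ 2)
               + (Complex.I * ζ / 2) • (σ3 * U x' t)) * ψ x' t ζ :=
          funext fun x' => (hψt x' t ζ hζ).deriv
        rw [hfun]
        exact hBx.matmul (hψx x t ζ hζ)
      have hmix := Stmt15Aux.clairaut (fun a b => ψ a b ζ) (hψsmooth ζ hζ) x t
      replace hmix := (hHx.deriv.symm.trans hmix).trans hGt.deriv
      apply Stmt15Aux.cancel_unit (hψinv x t ζ hζ)
      rw [Stmt15Aux.mat_expand, ← hmix, sub_self]
    -- extract the scalar coefficient equations
    have h01 : (qt - qx + u0 - 2 * Complex.I * q0 - Complex.I * (u0 * conj u0) * q0) = 0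
        ∧ (Complex.I / 2 * (q0 - ux)) = 0 := by
      apply hpoly
      intro k
      have h := congrArg (fun M : M2 => M 0 1) (hE k)
      rw [hQmat, hUxt] at h
      set ζ := w k with hζeq
      have hz : ζ ≠ 0 := by rw [hζeq]; exact hwne k
      simp [hW, σ3, Matrix.mul_apply, Fin.sum_univ_two, pow_two] at h
      ring_nf at h
      field_simp [hz] at h
      have hD : (ζ^2*ζ^2*2*(ζ*2)*ζ : ℂ) ≠ 0 := by simp [hz]
      have h3 := congrArg (fun z : ℂ => z * (ζ^2*ζ^2*2*(ζ*2)*ζ)) h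
      have h4 : ζ^5 * ((qt - qx + u0 - 2 * Complex.I * q0
          - Complex.I * (u0 * conj u0) * q0) * ζ ^ 2
          + (Complex.I / 2 * (q0 - ux)) * ζ ^ 4) = ζ^5 * 0 := by
        rw [mul_zero]
        linear_combination (ζ^5 * ζ^2 / 2) * h + (ζ^7 * u0) * Complex.I_sq
      exact mul_left_cancel₀ (pow_ne_zero 5 hz) h4
    have h10 : (rt - rx - conj u0 + 2 * Complex.I * r0 + Complex.I * (u0 * conj u0) * r0) = 0
        ∧ (-(Complex.I / 2) * (r0 + conj ux)) = 0 := by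
      apply hpoly
      intro k
      have h := congrArg (fun M : M2 => M 1 0) (hE k)
      rw [hQmat, hUxt] at h
      set ζ := w k with hζeq
      have hz : ζ ≠ 0 := by rw [hζeq]; exact hwne k
      simp [hW, σ3, Matrix.mul_apply, Fin.sum_univ_two, pow_two] at h
      ring_nf at h
      field_simp [hz] at h
      have h4 : ζ^2 * ((rt - rx - conj u0 + 2 * Complex.I * r0
          + Complex.I * (u0 * conj u0) * r0) * ζ ^ 2
          + (-(Complex.I / 2) * (r0 + conj ux)) * ζ ^ 4) = ζ^2 * 0 := by
        rw [mul_zero]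
        linear_combination (ζ^2 * ζ^2 / 2) * h - (ζ^4 * conj u0) * Complex.I_sq
      exact mul_left_cancel₀ (pow_ne_zero 2 hz) h4
    have hIne : (Complex.I / 2 : ℂ) ≠ 0 := by
      simp [Complex.I_ne_zero]
    refine ⟨?_, ?_, ?_⟩
    · have h := h01.2
      rcases mul_eq_zero.mp h with h' | h'
      · exact absurd h' hIne
      · exact sub_eq_zero.mp h'
    · have h := h10.2
      have hIne' : (-(Complex.I / 2) : ℂ) ≠ 0 := by simpa using hIne
      rcases mul_eq_zero.mp h with h' | h'
      · exact absurd h' hIne'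
      · exact eq_neg_of_add_eq_zero_left h'
    · linear_combination h01.1
  constructor
  · intro x t
    refine Eq.trans ?_ (hUderiv x t).deriv.symm
    obtain ⟨h1, h2, -⟩ := key x t
    ext i j
    fin_cases i <;> fin_cases j <;>
      simp [(hQoff x t).1, (hQoff x t).2, h1, h2]
  · intro x t
    obtain ⟨h1, -, h3⟩ := key x t
    have e1 : deriv (fun t' => Q x t' 0 1) t
        = deriv (fun x' => deriv (fun t' => u x' t') t) x := by
      have hfe : (fun t' => Q x t' 0 1) = fun t' => deriv (fun y => u y t') x :=
        funext fun t' => (key x t').1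
      rw [hfe]
      exact (Stmt15Aux.clairaut u hu x t).symm
    have e2 : deriv (fun x' => Q x' t 0 1) x
        = deriv (fun x' => deriv (fun y => u y t) x') x := by
      have hfe : (fun x' => Q x' t 0 1) = fun x' => deriv (fun y => u y t) x' :=
        funext fun x' => (key x' t).1
      rw [hfe]
    rw [e1, e2, h1] at h3
    linear_combination h3
end
end

section
/- Unimodularity of the dressing factor on the symmetric points: for the rank-one dressing factor D_j(ζ) = I + B_j/(ζ−ζ_j) − σ₃B_jσ₃/(ζ+ζ_j) with B_j = |z_j⟩⟨y_j| as in the dressing construction, det D_j(ζ) = (ζ² − ζ̄_j²)/(ζ² − ζ_j²) for all ζ ∉ {±ζ_j}. -/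
open Matrix Filter Topology ComplexConjugate

noncomputable section

attribute [local instance] Matrix.normedAddCommGroup Matrix.normedSpace

/-!
With `p = z₀y₀` and `q = z₁y₁` the diagonal entries of the rank-one matrix `B = |z⟩⟨y|`, the
matrix `1 + aB − bσ₃Bσ₃` has diagonal `1 + (a − b)p, 1 + (a − b)q` and off-diagonal entries
`(a + b)` times those of `B`, whose product is `pq`. Hence its determinant is
`1 + (a − b)(p + q) − 4abpq`, and for `a = (ζ − ζⱼ)⁻¹`, `b = (ζ + ζⱼ)⁻¹` this is
`(ζ² − ζⱼ² + 2ζⱼ(p + q) − 4pq)/(ζ² − ζⱼ²)`. The normalisation of `α` and its conjugate make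
`2ζⱼ(p + q) − 4pq = ζⱼ² − ζ̄ⱼ²`.
-/

theorem det_one_add_smul_vecMulVec_sub_smul_sigma3_conj (a b : ℂ) (z y : Fin 2 → ℂ) :
    (1 + a • vecMulVec z y - b • (σ3 * vecMulVec z y * σ3)).det
      = 1 + (a - b) * (z ⬝ᵥ y) - 4 * a * b * (z 0 * y 0) * (z 1 * y 1) := by
  rw [det_fin_two]
  simp only [Matrix.add_apply, Matrix.sub_apply, Matrix.smul_apply, one_apply_eq,
    one_apply_ne zero_ne_one, one_apply_ne one_ne_zero, vecMulVec_apply, σ3, mul_apply,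
    Fin.sum_univ_two, smul_eq_mul, of_apply, cons_val', cons_val_zero, cons_val_one,
    empty_val', cons_val_fin_one, dotProduct]
  ring

theorem two_mul_dotProduct_sub_four_mul_diag_eq (zj α : ℂ) (y z : Fin 2 → ℂ)
    (hα : α * (zj * y 0 * conj (y 0) + conj zj * y 1 * conj (y 1)) = 1)
    (hz0 : z 0 = (zj ^ 2 - (conj zj) ^ 2) / 2 * α * conj (y 0))
    (hz1 : z 1 = (zj ^ 2 - (conj zj) ^ 2) / 2 * conj α * conj (y 1)) :
    2 * zj * (z ⬝ᵥ y) - 4 * (z 0 * y 0) * (z 1 * y 1) = zj ^ 2 - (conj zj) ^ 2 := by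
  have hα_conj : conj α * (conj zj * conj (y 0) * y 0 + zj * conj (y 1) * y 1) = 1 := by
    simpa using congrArg conj hα
  rw [dotProduct, Fin.sum_univ_two, hz0, hz1]
  linear_combination ((zj ^ 2 - (conj zj) ^ 2) * (1 - y 1 * conj (y 1) * conj α * zj)) * hα
    + ((zj ^ 2 - (conj zj) ^ 2) * (y 1 * conj (y 1) * α * conj zj)) * hα_conj

theorem stmt19_general
    (zj : ℂ)
    (y : Fin 2 → ℂ)
    (α : ℂ) (hα : α * (zj * y 0 * conj (y 0) + conj zj * y 1 * conj (y 1)) = 1)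
    (z : Fin 2 → ℂ)
    (hz0 : z 0 = (zj ^ 2 - (conj zj) ^ 2) / 2 * α * conj (y 0))
    (hz1 : z 1 = (zj ^ 2 - (conj zj) ^ 2) / 2 * conj α * conj (y 1))
    (B : M2) (hB : B = Matrix.vecMulVec z y)
    (D : ℂ → M2)
    (hD : ∀ w : ℂ, D w = 1 + (w - zj)⁻¹ • B - (w + zj)⁻¹ • (σ3 * B * σ3)) :
    ∀ w : ℂ, w ≠ zj → w ≠ -zj →
      (D w).det = (w ^ 2 - (conj zj) ^ 2) / (w ^ 2 - zj ^ 2) := by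
  intro w hw_sub hw_add
  have hsub : w - zj ≠ 0 := sub_ne_zero.mpr hw_sub
  have hadd : w + zj ≠ 0 := by rwa [← sub_neg_eq_add, sub_ne_zero]
  have key := two_mul_dotProduct_sub_four_mul_diag_eq zj α y z hα hz0 hz1
  rw [hD w, hB, det_one_add_smul_vecMulVec_sub_smul_sigma3_conj,
    show w ^ 2 - zj ^ 2 = (w - zj) * (w + zj) by ring]
  field_simp
  linear_combination key

/-- Unimodularity of the dressing factor:
`det Dⱼ(ζ) = (ζ² − ζ̄ⱼ²)/(ζ² − ζⱼ²)` for `ζ ∉ {±ζⱼ}`. -/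
theorem stmt19
    (zj : ℂ) (hzj : zj ^ 2 ≠ (conj zj) ^ 2)
    (y : Fin 2 → ℂ) (hy : y ≠ 0)
    (α : ℂ) (hα : α * (zj * y 0 * conj (y 0) + conj zj * y 1 * conj (y 1)) = 1)
    (z : Fin 2 → ℂ)
    (hz0 : z 0 = (zj ^ 2 - (conj zj) ^ 2) / 2 * α * conj (y 0))
    (hz1 : z 1 = (zj ^ 2 - (conj zj) ^ 2) / 2 * conj α * conj (y 1))
    (B : M2) (hB : B = Matrix.vecMulVec z y)
    (E : ℂ → M2)
    (hE : ∀ w : ℂ, E w = 1 + (w - conj zj)⁻¹ • Bᴴ - (w + conj zj)⁻¹ • (σ3 * Bᴴ * σ3))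
    (D : ℂ → M2)
    (hD : ∀ w : ℂ, D w = 1 + (w - zj)⁻¹ • B - (w + zj)⁻¹ • (σ3 * B * σ3)) :
    ∀ w : ℂ, w ≠ zj → w ≠ -zj →
      (D w).det = (w ^ 2 - (conj zj) ^ 2) / (w ^ 2 - zj ^ 2) :=
  stmt19_general zj y α hα z hz0 hz1 B hB D hD
end
end
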